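/- arXiv:2509.25967 — 4 statements merged into one kernel-verified Lean document; each statement's English description precedes it below -/
import Mathlib

section
/- Let E = EuclideanSpace ℝ (Fin n), let f : E → E and η, g : E → ℝ all be C² (ContDiff ℝ 2), and suppose the entropy compatibility relation holds: for every u ∈ E and every h ∈ E, ⟪∇η(u), (Df)(u) h⟫ = ⟪∇g(u), h⟫, where Df(u) denotes the Fréchet derivative of f at u. Then for every u the linear map A₀(u)∘Df(u) is symmetric, where A₀(u) := D(∇η)(u) is the Hessian of η; that is, for all h, k ∈ E, ⟪A₀(u)(Df(u) h), k⟫ = ⟪A₀(u)(Df(u) k), h⟫. (This is the symmetrization assertion of the Godunov–Mock theorem.) -/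
/-!
Writing the compatibility relation as `Dη(u) ∘ Df(u) = Dg(u)` and differentiating it once more in
a direction `k` gives `D²g(u) k h = Dη(u) (D²f(u) k h) + D²η(u) k (Df(u) h)`. The first two terms
are symmetric in `(h, k)` by Schwarz's theorem, hence so is the last one; the symmetry of the
Hessian `A₀(u) = D²η(u)` then turns this into the symmetry of `A₀(u) ∘ Df(u)`.
-/

open Topology

section

variable {𝕜 E G : Type*} [NontriviallyNormedField 𝕜] [NormedAddCommGroup E] [NormedSpace 𝕜 E]
  [NormedAddCommGroup G] [NormedSpace 𝕜 G]

theorem fderiv_fderiv_apply_fderiv_comm {f : E → E} {η g : E → G} {u : E}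
    (hcompat : (fun x => (fderiv 𝕜 η x).comp (fderiv 𝕜 f x)) =ᶠ[𝓝 u] fderiv 𝕜 g)
    (hη : DifferentiableAt 𝕜 (fderiv 𝕜 η) u) (hf : DifferentiableAt 𝕜 (fderiv 𝕜 f) u)
    (hf_symm : IsSymmSndFDerivAt 𝕜 f u) (hg_symm : IsSymmSndFDerivAt 𝕜 g u) (h k : E) :
    fderiv 𝕜 (fderiv 𝕜 η) u k (fderiv 𝕜 f u h) = fderiv 𝕜 (fderiv 𝕜 η) u h (fderiv 𝕜 f u k) := by
  have leibniz : ∀ v w, fderiv 𝕜 (fderiv 𝕜 g) u v w =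
      fderiv 𝕜 η u (fderiv 𝕜 (fderiv 𝕜 f) u v w) + fderiv 𝕜 (fderiv 𝕜 η) u v (fderiv 𝕜 f u w) := by
    intro v w
    rw [← hcompat.fderiv_eq, fderiv_clm_comp hη hf]
    simp
  calc fderiv 𝕜 (fderiv 𝕜 η) u k (fderiv 𝕜 f u h)
      = fderiv 𝕜 (fderiv 𝕜 g) u k h - fderiv 𝕜 η u (fderiv 𝕜 (fderiv 𝕜 f) u k h) := by
        rw [leibniz, add_sub_cancel_left]
    _ = fderiv 𝕜 (fderiv 𝕜 g) u h k - fderiv 𝕜 η u (fderiv 𝕜 (fderiv 𝕜 f) u h k) := by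
        rw [hf_symm, hg_symm]
    _ = fderiv 𝕜 (fderiv 𝕜 η) u h (fderiv 𝕜 f u k) := by
        rw [leibniz, add_sub_cancel_left]

end

section

variable {E : Type*} [NormedAddCommGroup E] [InnerProductSpace ℝ E] [CompleteSpace E]

theorem inner_fderiv_gradient_apply (η : E → ℝ) (u a b : E) :
    inner ℝ (fderiv ℝ (gradient η) u a) b = fderiv ℝ (fderiv ℝ η) u a b := by
  rw [← toDual_comp_gradient, LinearIsometryEquiv.comp_fderiv]
  rfl

end

/-- **Godunov–Mock theorem, symmetrization part.**
If `(η, g)` is an entropy pair for the flux component `f`, i.e.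
`⟪∇η(u), Df(u) h⟫ = ⟪∇g(u), h⟫` for all `u, h`, then the composition
`A₀(u) ∘ Df(u)`, where `A₀(u) = D(∇η)(u)` is the Hessian of `η`,
is symmetric with respect to the inner product. -/
theorem godunov_mock_symmetrization {n : ℕ}
    (f : EuclideanSpace ℝ (Fin n) → EuclideanSpace ℝ (Fin n))
    (η g : EuclideanSpace ℝ (Fin n) → ℝ)
    (hf : ContDiff ℝ 2 f) (hη : ContDiff ℝ 2 η) (hg : ContDiff ℝ 2 g)
    (hcompat : ∀ u h : EuclideanSpace ℝ (Fin n),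
      (inner ℝ (gradient η u) (fderiv ℝ f u h) : ℝ) = inner ℝ (gradient g u) h) :
    ∀ u h k : EuclideanSpace ℝ (Fin n),
      (inner ℝ (fderiv ℝ (gradient η) u (fderiv ℝ f u h)) k : ℝ)
        = inner ℝ (fderiv ℝ (gradient η) u (fderiv ℝ f u k)) h := by
  intro u h k
  have hcomp : (fun x => (fderiv ℝ η x).comp (fderiv ℝ f x)) = fderiv ℝ g := by
    ext x v
    simpa only [ContinuousLinearMap.comp_apply, inner_gradient_left] using hcompat x v
  have hf_symm : IsSymmSndFDerivAt ℝ f u := hf.contDiffAt.isSymmSndFDerivAt (by simp)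
  have hη_symm : IsSymmSndFDerivAt ℝ η u := hη.contDiffAt.isSymmSndFDerivAt (by simp)
  have hg_symm : IsSymmSndFDerivAt ℝ g u := hg.contDiffAt.isSymmSndFDerivAt (by simp)
  rw [inner_fderiv_gradient_apply, inner_fderiv_gradient_apply, hη_symm, hη_symm _ h]
  exact fderiv_fderiv_apply_fderiv_comm (.of_eq hcomp)
    ((hη.fderiv_right le_rfl).differentiable one_ne_zero u)
    ((hf.fderiv_right le_rfl).differentiable one_ne_zero u) hf_symm hg_symm h k
end

section
/- Let τ_l > 0, ε_l > 0, p_l, v_l, v_t, v★ ∈ ℝ and λ_l > 0. Set Δ := v★ − v_l, τ_l★ := τ_l + Δ/λ_l, p_l★ := p_l − λ_l Δ, e_l := ε_l + v_l²/2 + v_t²/2, and let e_l★ be determined by the energy jump relation λ_l (e_l★ − e_l) + p_l★ v★ − p_l v_l = 0, with star internal energy ε_l★ := e_l★ − (v★)²/2 − v_t²/2. Then: (i) ε_l★ = ε_l − (p_l/λ_l) Δ + Δ²/2; (ii) if moreover λ_l τ_l > −Δ and λ_l √(2 ε_l) > |p_l|, then τ_l★ > 0 and ε_l★ > 0. -/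
/-- Star-state internal energy formula and positivity of the intermediate
state of the simple Lagrangian Riemann solver across the left wave:
`ε_l★ = ε_l − (p_l/λ_l)Δ + Δ²/2`, and under the wave-speed conditions
`λ_l τ_l > −Δ` and `λ_l √(2 ε_l) > |p_l|` one has `τ_l★ > 0` and `ε_l★ > 0`. -/
theorem lagrangian_star_state_positivity
    (τl εl pl vl vt vs lamL : ℝ)
    (hτ : 0 < τl) (hε : 0 < εl) (hlam : 0 < lamL)
    (Δ τls pls el els εls : ℝ)
    (hΔ : Δ = vs - vl)
    (hτls : τls = τl + Δ / lamL)
    (hpls : pls = pl - lamL * Δ)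
    (hel : el = εl + vl ^ 2 / 2 + vt ^ 2 / 2)
    (hels : lamL * (els - el) + pls * vs - pl * vl = 0)
    (hεls : εls = els - vs ^ 2 / 2 - vt ^ 2 / 2) :
    (εls = εl - (pl / lamL) * Δ + Δ ^ 2 / 2)
    ∧ (lamL * τl > -Δ → lamL * Real.sqrt (2 * εl) > |pl| → 0 < τls ∧ 0 < εls) := by
  have hlam' : lamL ≠ 0 := ne_of_gt hlam
  have hform : εls = εl - (pl / lamL) * Δ + Δ ^ 2 / 2 := by
    have : els = el - (pls * vs - pl * vl) / lamL := by
      field_simp at hels ⊢; linarith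
    subst hεls hΔ hpls hel this
    field_simp
    ring
  refine ⟨hform, fun h1 h2 => ?_⟩
  constructor
  · rw [hτls]
    have : -Δ / lamL < τl := by
      rw [div_lt_iff₀ hlam]; nlinarith
    have : 0 < τl + Δ / lamL := by
      rw [neg_div] at this; linarith
    exact this
  · have hsq : pl ^ 2 < lamL ^ 2 * (2 * εl) := by
      have h0 : (0:ℝ) ≤ 2 * εl := by linarith
      have hs : Real.sqrt (2 * εl) ^ 2 = 2 * εl := Real.sq_sqrt h0
      have : |pl| ^ 2 < (lamL * Real.sqrt (2 * εl)) ^ 2 := by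
        apply pow_lt_pow_left₀ h2 (abs_nonneg pl)
        norm_num
      rw [sq_abs] at this
      calc pl ^ 2 < (lamL * Real.sqrt (2 * εl)) ^ 2 := this
        _ = lamL ^ 2 * (2 * εl) := by rw [mul_pow, hs]
    rw [hform]
    have key : εl - pl ^ 2 / (2 * lamL ^ 2) > 0 := by
      rw [gt_iff_lt, sub_pos, div_lt_iff₀ (by positivity)]
      nlinarith
    have hrw : εl - (pl / lamL) * Δ + Δ ^ 2 / 2
        = (εl - pl ^ 2 / (2 * lamL ^ 2)) + (Δ - pl / lamL) ^ 2 / 2 := by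
      field_simp
      ring
    rw [hrw]
    positivity
end

section
/- Let C be a nonempty finite set, w_c ∈ ℝ^p for c ∈ C with arithmetic mean w̄ := (1/|C|) ∑_c w_c, let A₀ be a symmetric negative definite p×p real matrix, and Φ_c ∈ ℝ^p residuals. For α ∈ ℝ define the modified residuals Φ̃_c := Φ_c + α • A₀ (w_c − w̄) and set D := ∑_c ⟨A₀ (w_c − w̄), w_c − w̄⟩. Then: (i) ∑_c Φ̃_c = ∑_c Φ_c (the modification preserves conservation); (ii) ∑_c ⟨w_c, Φ̃_c⟩ = ∑_c ⟨w_c, Φ_c⟩ + α D; (iii) if the w_c are not all equal then D < 0, and for any target value G ∈ ℝ, setting E := G − ∑_c ⟨w_c, Φ_c⟩, every α ≥ E/D yields the entropy stability inequality ∑_c ⟨w_c, Φ̃_c⟩ ≤ G. -/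
open scoped RealInnerProductSpace

/-! Subtracting the mean makes the deviations `w_c − w̄` sum to zero, so the correction
`α • A₀ (w_c − w̄)` sums to zero by linearity, and in `∑ ⟨w_c, A₀ (w_c − w̄)⟩` the mean `w̄` may
be subtracted from the left factor as well, giving `D`. Negative definiteness makes every term of
`D` nonpositive, and a term with `w_c ≠ w̄`, which exists unless all `w_c` coincide, strictly
negative. The entropy production `∑ ⟨w_c, Φ_c⟩ + α D` is then affine and decreasing in `α`. -/

theorem Finset.sum_sub_mean_eq_zero {ι 𝕜 V : Type*} [DivisionRing 𝕜] [CharZero 𝕜]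
    [AddCommGroup V] [Module 𝕜 V] (s : Finset ι) (w : ι → V) :
    ∑ i ∈ s, (w i - ((s.card : 𝕜))⁻¹ • ∑ j ∈ s, w j) = 0 := by
  rcases s.eq_empty_or_nonempty with rfl | hs
  · simp
  have hcard : (s.card : 𝕜) ≠ 0 := by exact_mod_cast hs.card_pos.ne'
  rw [sum_sub_distrib, sum_const, ← Nat.cast_smul_eq_nsmul 𝕜, smul_smul,
    mul_inv_cancel₀ hcard, one_smul, sub_self]

theorem sum_add_smul_map_of_sum_eq_zero {ι R M N : Type*} [CommSemiring R]
    [AddCommMonoid M] [AddCommMonoid N] [Module R M] [Module R N] (s : Finset ι)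
    (A : M →ₗ[R] N) (Φ : ι → N) (v : ι → M) (hv : ∑ i ∈ s, v i = 0) (α : R) :
    ∑ i ∈ s, (Φ i + α • A (v i)) = ∑ i ∈ s, Φ i := by
  rw [Finset.sum_add_distrib, ← Finset.smul_sum, ← map_sum, hv, map_zero, smul_zero, add_zero]

section InnerProduct

variable {ι E : Type*} [NormedAddCommGroup E] [InnerProductSpace ℝ E]

theorem sum_inner_smul_map_sub_of_sum_sub_eq_zero (s : Finset ι) (A : E →ₗ[ℝ] E) (w : ι → E)
    (m : E) (hm : ∑ i ∈ s, (w i - m) = 0) (α : ℝ) :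
    ∑ i ∈ s, ⟪w i, α • A (w i - m)⟫ = α * ∑ i ∈ s, ⟪A (w i - m), w i - m⟫ := by
  have hmean : ∑ i ∈ s, ⟪m, A (w i - m)⟫ = 0 := by
    rw [← inner_sum, ← map_sum, hm, map_zero, inner_zero_right]
  have hsplit : ∀ i, ⟪w i, A (w i - m)⟫ = ⟪A (w i - m), w i - m⟫ + ⟪m, A (w i - m)⟫ := by
    intro i
    rw [real_inner_comm (w i - m), ← inner_add_left, sub_add_cancel]
  simp only [real_inner_smul_right, ← Finset.mul_sum, hsplit, Finset.sum_add_distrib, hmean,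
    add_zero]

theorem sum_inner_map_self_neg_of_exists_ne_zero (s : Finset ι) (A : E →ₗ[ℝ] E)
    (hneg : ∀ x, x ≠ 0 → ⟪A x, x⟫ < 0) (v : ι → E) (hv : ∃ i ∈ s, v i ≠ 0) :
    ∑ i ∈ s, ⟪A (v i), v i⟫ < 0 := by
  have hle : ∀ x, ⟪A x, x⟫ ≤ 0 := fun x ↦ by
    rcases eq_or_ne x 0 with rfl | hx
    · simp
    · exact (hneg x hx).le
  obtain ⟨i, hi, hvi⟩ := hv
  exact Finset.sum_neg' (fun j _ ↦ hle (v j)) ⟨i, hi, hneg _ hvi⟩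

end InnerProduct

theorem exists_sub_ne_zero_of_not_forall_eq {ι V : Type*} [AddGroup V] {w : ι → V}
    (h : ¬ ∀ i j, w i = w j) (m : V) : ∃ i, w i - m ≠ 0 := by
  contrapose! h
  intro i j
  rw [sub_eq_zero.mp (h i), sub_eq_zero.mp (h j)]

theorem entropy_correction_general {p : ℕ} {C : Type*} [Fintype C]
    (w : C → EuclideanSpace ℝ (Fin p))
    (A₀ : EuclideanSpace ℝ (Fin p) →ₗ[ℝ] EuclideanSpace ℝ (Fin p))
    (hneg : ∀ x, x ≠ 0 → ⟪A₀ x, x⟫ < 0)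
    (Φ : C → EuclideanSpace ℝ (Fin p))
    (wbar : EuclideanSpace ℝ (Fin p))
    (hwbar : wbar = ((Fintype.card C : ℝ))⁻¹ • ∑ c, w c)
    (D : ℝ) (hD : D = ∑ c, ⟪A₀ (w c - wbar), w c - wbar⟫)
    (Φt : ℝ → C → EuclideanSpace ℝ (Fin p))
    (hΦt : ∀ α c, Φt α c = Φ c + α • A₀ (w c - wbar)) :
    (∀ α, ∑ c, Φt α c = ∑ c, Φ c)
    ∧ (∀ α, ∑ c, ⟪w c, Φt α c⟫ = (∑ c, ⟪w c, Φ c⟫) + α * D)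
    ∧ ((¬ ∀ c c', w c = w c') → D < 0 ∧
        ∀ G α : ℝ, α ≥ (G - ∑ c, ⟪w c, Φ c⟫) / D →
          ∑ c, ⟪w c, Φt α c⟫ ≤ G) := by
  have hdev : ∑ c, (w c - wbar) = 0 := hwbar ▸ Finset.univ.sum_sub_mean_eq_zero w
  have hcons : ∀ α, ∑ c, Φt α c = ∑ c, Φ c := fun α ↦ by
    simp only [hΦt]
    exact sum_add_smul_map_of_sum_eq_zero _ A₀ Φ _ hdev α
  have hprod : ∀ α, ∑ c, ⟪w c, Φt α c⟫ = (∑ c, ⟪w c, Φ c⟫) + α * D := fun α ↦ by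
    simp only [hΦt, inner_add_right, Finset.sum_add_distrib, hD,
      sum_inner_smul_map_sub_of_sum_sub_eq_zero _ A₀ w wbar hdev α]
  refine ⟨hcons, hprod, fun hne ↦ ?_⟩
  have hDneg : D < 0 := by
    obtain ⟨c, hc⟩ := exists_sub_ne_zero_of_not_forall_eq hne wbar
    exact hD ▸ sum_inner_map_self_neg_of_exists_ne_zero _ A₀ hneg _ ⟨c, Finset.mem_univ c, hc⟩
  refine ⟨hDneg, fun G α hα ↦ ?_⟩
  rw [ge_iff_le, div_le_iff_of_neg hDneg] at hα
  linarith [hprod α]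

/-- **Entropy correction of residuals.**
The modification `Φ̃_c = Φ_c + α • A₀(w_c − w̄)`, with `A₀` symmetric negative
definite and `w̄` the arithmetic mean of the `w_c`, preserves the sum of the
residuals, shifts the entropy production by `α · D` with
`D = ∑ ⟨A₀(w_c − w̄), w_c − w̄⟩`, and, if the `w_c` are not all equal (so that
`D < 0`), any `α ≥ E/D` with `E = G − ∑⟨w_c, Φ_c⟩` enforces the entropy
stability inequality `∑ ⟨w_c, Φ̃_c⟩ ≤ G`. -/
theorem entropy_correction {p : ℕ} {C : Type*} [Fintype C] [Nonempty C]
    (w : C → EuclideanSpace ℝ (Fin p))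
    (A₀ : EuclideanSpace ℝ (Fin p) →ₗ[ℝ] EuclideanSpace ℝ (Fin p))
    (hsymm : ∀ x y, ⟪A₀ x, y⟫ = ⟪x, A₀ y⟫)
    (hneg : ∀ x, x ≠ 0 → ⟪A₀ x, x⟫ < 0)
    (Φ : C → EuclideanSpace ℝ (Fin p))
    (wbar : EuclideanSpace ℝ (Fin p))
    (hwbar : wbar = ((Fintype.card C : ℝ))⁻¹ • ∑ c, w c)
    (D : ℝ) (hD : D = ∑ c, ⟪A₀ (w c - wbar), w c - wbar⟫)
    (Φt : ℝ → C → EuclideanSpace ℝ (Fin p))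
    (hΦt : ∀ α c, Φt α c = Φ c + α • A₀ (w c - wbar)) :
    (∀ α, ∑ c, Φt α c = ∑ c, Φ c)
    ∧ (∀ α, ∑ c, ⟪w c, Φt α c⟫ = (∑ c, ⟪w c, Φ c⟫) + α * D)
    ∧ ((¬ ∀ c c', w c = w c') → D < 0 ∧
        ∀ G α : ℝ, α ≥ (G - ∑ c, ⟪w c, Φ c⟫) / D →
          ∑ c, ⟪w c, Φt α c⟫ ≤ G) :=
  entropy_correction_general w A₀ hneg Φ wbar hwbar D hD Φt hΦt
end

section
/- Let (X, μ) be a measure space with μ finite, let (ω_p)_{p ∈ Fin N} be a measurable partition of X with μ(ω_p) > 0 for all p, and let φ_k : X → ℝ (k ∈ Fin N) be square-integrable functions such that the Gram (mass) matrix M with M_{kl} = ∫_X φ_k φ_l dμ is invertible and such that there is z : Fin N → ℝ with ∑_k z_k φ_k = 1 μ-almost everywhere (the span of the φ_k contains the constants). Let D be the diagonal matrix with entries μ(ω_p) and P the matrix with P_{pk} = (1/μ(ω_p)) ∫_{ω_p} φ_k dμ. Then: (i) the row vector 1ᵀ D P equals y, where y_k = ∫_X φ_k dμ; (ii) M z =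 y; consequently (iii) for every Φ : Fin N → ℝ, 1ᵀ (D P M^{-1} Φ) = ∑_k z_k Φ_k. (In particular, applied to the DG residual vector Φ, for which ∑_k z_k Φ_k = ∮_{∂K} f̂·n, the weighted sum of the subcell-average updates recovers exactly the boundary flux integral.) -/
/-!
Summing `|ω_p|` times the subcell averages of `φ_k` over the partition gives `∫ φ_k`, so
`1ᵀ D P = y`. Since the constants lie in the span of the `φ_k`, testing `∑ z_l φ_l = 1` against
`φ_k` gives `M z = y`; as the mass matrix is symmetric, `yᵀ M⁻¹ = zᵀ`, and therefore
`1ᵀ D P M⁻¹ Φ = yᵀ M⁻¹ Φ = zᵀ Φ`.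
-/

open MeasureTheory
open scoped Matrix

namespace Matrix

variable {n R : Type*} [Fintype n] [DecidableEq n]

theorem one_vecMul_diagonal_mul [Semiring R] (d : n → R) (A : Matrix n n R) :
    1 ᵥ* (diagonal d * A) = d ᵥ* A := by
  rw [← vecMul_vecMul]
  congr
  ext p
  rw [vecMul_diagonal, Pi.one_apply, one_mul]

theorem IsSymm.vecMul_nonsing_inv_of_mulVec_eq [CommRing R] {M : Matrix n n R} (hM : M.IsSymm)
    (hMunit : IsUnit M) {y z : n → R} (hz : M *ᵥ z = y) : y ᵥ* M⁻¹ = z := by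
  rw [← hz, ← vecMul_transpose, hM.eq, vecMul_vecMul,
    mul_nonsing_inv _ ((isUnit_iff_isUnit_det M).mp hMunit), vecMul_one]

end Matrix

section MassMatrix

variable {X ι : Type*} [MeasurableSpace X] (μ : Measure X) (φ : ι → X → ℝ)

noncomputable def massMatrix : Matrix ι ι ℝ :=
  Matrix.of fun k l => ∫ x, φ k x * φ l x ∂μ

theorem massMatrix_isSymm : (massMatrix μ φ).IsSymm := by
  ext k l
  simp only [massMatrix, Matrix.transpose_apply, Matrix.of_apply, mul_comm]

variable {μ φ}

theorem massMatrix_mulVec_of_sum_eq_one [Fintype ι] (hφ : ∀ k, MemLp (φ k) 2 μ) {z : ι → ℝ}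
    (hz : ∀ᵐ x ∂μ, ∑ l, z l * φ l x = 1) :
    massMatrix μ φ *ᵥ z = fun k => ∫ x, φ k x ∂μ := by
  ext k
  have hprod : ∀ l, Integrable (fun x => z l * (φ k x * φ l x)) μ := fun l =>
    ((hφ k).integrable_mul (hφ l)).const_mul (z l)
  calc (massMatrix μ φ *ᵥ z) k = ∑ l, ∫ x, z l * (φ k x * φ l x) ∂μ := by
        simp only [Matrix.mulVec, dotProduct, massMatrix, Matrix.of_apply, integral_const_mul,
          mul_comm]
    _ = ∫ x, φ k x * ∑ l, z l * φ l x ∂μ := by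
        rw [← integral_finsetSum _ fun l _ => hprod l]
        simp only [Finset.mul_sum, mul_left_comm]
    _ = ∫ x, φ k x ∂μ := integral_congr_ae <| by
        filter_upwards [hz] with x hx
        rw [hx, mul_one]

end MassMatrix

theorem integral_eq_sum_measureReal_mul_setAverage {X ι : Type*} [MeasurableSpace X] [Fintype ι]
    {μ : Measure X} [IsFiniteMeasure μ] {ω : ι → Set X} (hmeas : ∀ p, MeasurableSet (ω p))
    (hdisj : Pairwise fun p q => Disjoint (ω p) (ω q)) (hcover : ⋃ p, ω p = Set.univ)
    {f : X → ℝ} (hf : Integrable f μ) :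
    ∫ x, f x ∂μ = ∑ p, μ.real (ω p) * ⨍ x in ω p, f x ∂μ := by
  rw [← setIntegral_univ, ← hcover, integral_iUnion_fintype hmeas hdisj fun _ => hf.integrableOn]
  exact Finset.sum_congr rfl fun p _ => (measure_smul_setAverage f (measure_ne_top μ _)).symm

theorem dg_subcell_global_conservation_general
    {X : Type*} [MeasurableSpace X] (μ : Measure X) [IsFiniteMeasure μ]
    (N : ℕ) (ω : Fin N → Set X)
    (hmeas : ∀ p, MeasurableSet (ω p))
    (hdisj : Pairwise fun p q => Disjoint (ω p) (ω q))
    (hcover : (⋃ p, ω p) = Set.univ)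
    (φ : Fin N → X → ℝ)
    (hφ : ∀ k, MemLp (φ k) 2 μ)
    (M : Matrix (Fin N) (Fin N) ℝ)
    (hM : ∀ k l, M k l = ∫ x, φ k x * φ l x ∂μ)
    (hMunit : IsUnit M)
    (z : Fin N → ℝ)
    (hz : ∀ᵐ x ∂μ, ∑ k, z k * φ k x = 1)
    (D P : Matrix (Fin N) (Fin N) ℝ)
    (hD : D = Matrix.diagonal fun p => (μ (ω p)).toReal)
    (hP : ∀ p k, P p k = ((μ (ω p)).toReal)⁻¹ * ∫ x in ω p, φ k x ∂μ) :
    (Matrix.vecMul (fun _ => (1 : ℝ)) (D * P) = fun k => ∫ x, φ k x ∂μ)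
    ∧ (M.mulVec z = fun k => ∫ x, φ k x ∂μ)
    ∧ (∀ Φ : Fin N → ℝ, ∑ p, (D * P * M⁻¹).mulVec Φ p = ∑ k, z k * Φ k) := by
  obtain rfl : M = massMatrix μ φ := Matrix.ext hM
  have hP_avg : P = Matrix.of fun p k => ⨍ x in ω p, φ k x ∂μ := by
    ext p k
    rw [hP, Matrix.of_apply, setAverage_eq, smul_eq_mul, measureReal_def]
  have hDP : 1 ᵥ* (D * P) = fun k => ∫ x, φ k x ∂μ := by
    ext k
    rw [hD, hP_avg, Matrix.one_vecMul_diagonal_mul,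
      integral_eq_sum_measureReal_mul_setAverage hmeas hdisj hcover ((hφ k).integrable one_le_two)]
    rfl
  have hMz := massMatrix_mulVec_of_sum_eq_one hφ hz
  refine ⟨hDP, hMz, fun Φ => ?_⟩
  rw [← one_dotProduct, Matrix.dotProduct_mulVec, ← Matrix.vecMul_vecMul, hDP,
    (massMatrix_isSymm μ φ).vecMul_nonsing_inv_of_mulVec_eq hMunit hMz, dotProduct]

/-- **Global conservation of the subcell reformulation of a DG scheme.**
With a measurable partition `(ω_p)` of positive measure, square-integrable
basis functions `φ_k` whose span contains the constants (`∑ z_k φ_k = 1`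
a.e.) and invertible Gram matrix `M`, the diagonal matrix `D` of the measures
and the subcell-average matrix `P` satisfy: the ones row-vector times `D P`
is the vector of integrals `y_k = ∫ φ_k`, `M z = y`, and consequently
`1ᵀ (D P M⁻¹ Φ) = ∑ z_k Φ_k` for every residual vector `Φ`. -/
theorem dg_subcell_global_conservation
    {X : Type*} [MeasurableSpace X] (μ : Measure X) [IsFiniteMeasure μ]
    (N : ℕ) (ω : Fin N → Set X)
    (hmeas : ∀ p, MeasurableSet (ω p))
    (hdisj : Pairwise fun p q => Disjoint (ω p) (ω q))
    (hcover : (⋃ p, ω p) = Set.univ)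
    (hpos : ∀ p, 0 < μ (ω p))
    (φ : Fin N → X → ℝ)
    (hφ : ∀ k, MemLp (φ k) 2 μ)
    (M : Matrix (Fin N) (Fin N) ℝ)
    (hM : ∀ k l, M k l = ∫ x, φ k x * φ l x ∂μ)
    (hMunit : IsUnit M)
    (z : Fin N → ℝ)
    (hz : ∀ᵐ x ∂μ, ∑ k, z k * φ k x = 1)
    (D P : Matrix (Fin N) (Fin N) ℝ)
    (hD : D = Matrix.diagonal fun p => (μ (ω p)).toReal)
    (hP : ∀ p k, P p k = ((μ (ω p)).toReal)⁻¹ * ∫ x in ω p, φ k x ∂μ) :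
    (Matrix.vecMul (fun _ => (1 : ℝ)) (D * P) = fun k => ∫ x, φ k x ∂μ)
    ∧ (M.mulVec z = fun k => ∫ x, φ k x ∂μ)
    ∧ (∀ Φ : Fin N → ℝ, ∑ p, (D * P * M⁻¹).mulVec Φ p = ∑ k, z k * Φ k) :=
  dg_subcell_global_conservation_general μ N ω hmeas hdisj hcover φ hφ M hM hMunit z hz D P hD hP
end
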